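/- Fix a client i, a parameter index l, and the cluster index j with l ∈ S_j, and define the per-parameter error ε_{i,l} = w_{FedAvg,l} − w^{global}_{i,l}. If the parameters across clients satisfy |w_{i',l} − w_{i'',l}| ≤ B for all pairs of clients i', i'', and the centroids satisfy |c_{i',j}| ≤ C for all clients i', then |ε_{i,l}| ≤ B + 2C·((n − 1)/n). -/

import Mathlib

/-!
The error is the deviation of the FedAvg mean of `w · l` from `w i l`, minus the deviation of the
mean centroid from `c i j`. A mean of `n` numbers lies within `(n - 1) / n` times the largest
difference `|f k - f a|` of the entry `f a`; the differences are at most `B` for the parameters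
and at most `2C` for the centroids.
-/

open Finset

-- Only the `card ι - 1` terms with `k ≠ a` contribute to the deviation of the mean from `f a`.
theorem abs_sum_div_card_sub_le {ι : Type*} [Fintype ι] [DecidableEq ι] (f : ι → ℝ) (a : ι)
    (D : ℝ)
    (hD : ∀ k, |f k - f a| ≤ D) :
    |(∑ k, f k) / Fintype.card ι - f a| ≤
      D * (((Fintype.card ι : ℝ) - 1) / Fintype.card ι) := by
  have hpos : 0 < Fintype.card ι := Fintype.card_pos_iff.mpr ⟨a⟩
  have hcard : (0 : ℝ) < Fintype.card ι := by exact_mod_cast hpos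
  have hdev : (∑ k, f k) / Fintype.card ι - f a =
      (∑ k ∈ univ.erase a, (f k - f a)) / Fintype.card ι := by
    rw [sum_erase univ (f := fun k => f k - f a) (sub_self (f a)), sum_sub_distrib, sum_const,
      card_univ, nsmul_eq_mul]
    field_simp
  have hsum : |∑ k ∈ univ.erase a, (f k - f a)| ≤ ((Fintype.card ι : ℝ) - 1) * D :=
    calc |∑ k ∈ univ.erase a, (f k - f a)|
        ≤ ∑ k ∈ univ.erase a, |f k - f a| := abs_sum_le_sum_abs _ _
      _ ≤ ∑ _k ∈ univ.erase a, D := sum_le_sum fun k _ => hD k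
      _ = ((Fintype.card ι : ℝ) - 1) * D := by
        rw [sum_const, card_erase_of_mem (mem_univ a), card_univ, nsmul_eq_mul,
          Nat.cast_pred hpos]
  rw [hdev, abs_div, abs_of_pos hcard, div_le_iff₀ hcard]
  calc _ ≤ ((Fintype.card ι : ℝ) - 1) * D := hsum
    _ = _ := by field_simp

theorem total_error_bound_general
    (n r Noc : ℕ)
    (w : Fin n → Fin r → ℝ)
    (S : Fin Noc → Finset (Fin r))
    (c : Fin n → Fin Noc → ℝ)
    (cavg : Fin Noc → ℝ)
    (hcavg : ∀ j, cavg j = (∑ i, c i j) / n)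
    (wglob : Fin n → Fin r → ℝ)
    (hwglob : ∀ i (l : Fin r) (j : Fin Noc), l ∈ S j →
      wglob i l = w i l + (cavg j - c i j))
    (wfed : Fin r → ℝ)
    (hwfed : ∀ l, wfed l = (∑ i, w i l) / n)
    (i : Fin n) (l : Fin r) (j : Fin Noc) (hl : l ∈ S j)
    (B C : ℝ) (hB : 0 ≤ B)
    (hwbound : ∀ i' i'' : Fin n, |w i' l - w i'' l| ≤ B)
    (hcbound : ∀ i' : Fin n, |c i' j| ≤ C) :
    |wfed l - wglob i l| ≤ B + 2 * C * (((n : ℝ) - 1) / n) := by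
  have herr : wfed l - wglob i l =
      ((∑ i', w i' l) / n - w i l) - ((∑ i', c i' j) / n - c i j) := by
    rw [hwfed, hwglob i l j hl, hcavg]
    ring
  have hw := abs_sum_div_card_sub_le (fun i' => w i' l) i B fun i' => hwbound i' i
  have hc := abs_sum_div_card_sub_le (fun i' => c i' j) i (2 * C) fun i' =>
    (abs_sub _ _).trans (by linarith [hcbound i', hcbound i])
  simp only [Fintype.card_fin] at hw hc
  have hfrac : ((n : ℝ) - 1) / n ≤ 1 := div_le_one_of_le₀ (by linarith) (Nat.cast_nonneg n)
  rw [herr]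
  calc _ ≤ |(∑ i', w i' l) / n - w i l| + |(∑ i', c i' j) / n - c i j| := abs_sub _ _
    _ ≤ B + 2 * C * (((n : ℝ) - 1) / n) :=
      add_le_add (hw.trans (mul_le_of_le_one_right hB hfrac)) hc

/-- |ε_{i,l}| ≤ B + 2C·((n − 1)/n). -/
theorem total_error_bound
    (n r Noc : ℕ) (hn : 1 ≤ n)
    (w : Fin n → Fin r → ℝ)
    (S : Fin Noc → Finset (Fin r))
    (hS_nonempty : ∀ j, (S j).Nonempty)
    (hS_disjoint : ∀ j j', j ≠ j' → Disjoint (S j) (S j'))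
    (hS_cover : ∀ l, ∃ j, l ∈ S j)
    (c : Fin n → Fin Noc → ℝ)
    (hc : ∀ i j, c i j = (∑ l ∈ S j, w i l) / (S j).card)
    (cavg : Fin Noc → ℝ)
    (hcavg : ∀ j, cavg j = (∑ i, c i j) / n)
    (wglob : Fin n → Fin r → ℝ)
    (hwglob : ∀ i (l : Fin r) (j : Fin Noc), l ∈ S j →
      wglob i l = w i l + (cavg j - c i j))
    (wfed : Fin r → ℝ)
    (hwfed : ∀ l, wfed l = (∑ i, w i l) / n)
    (i : Fin n) (l : Fin r) (j : Fin Noc) (hl : l ∈ S j)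
    (B C : ℝ) (hB : 0 ≤ B) (hC : 0 ≤ C)
    (hwbound : ∀ i' i'' : Fin n, |w i' l - w i'' l| ≤ B)
    (hcbound : ∀ i' : Fin n, |c i' j| ≤ C) :
    |wfed l - wglob i l| ≤ B + 2 * C * (((n : ℝ) - 1) / n) :=
  total_error_bound_general n r Noc w S c cavg hcavg wglob hwglob wfed hwfed i l j hl B C hB hwbound
    hcbound
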